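/- arXiv:1401.1583 — 2 statements merged into one kernel-verified Lean document; each statement's English description precedes it below -/
import Mathlib

section
/- Let k, ℓ be positive integers with k ≠ ℓ. There is a short exact sequence 0 → ℤ → ℤ[1/|k−ℓ|] ⊕ ℤ → ℤ/2ℤ ⊕ ℤ[1/|k−ℓ|] → 0, where the first map sends n to (0, 2n). -/
/-- The subgroup `ℤ[1/n] = {a/n^k : a ∈ ℤ, k ∈ ℕ}` of `ℚ`. -/
def ZInv (n : ℤ) : AddSubgroup ℚ where
  carrier := {q : ℚ | ∃ (a : ℤ) (k : ℕ), q = (a : ℚ) / (n : ℚ) ^ k}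
  zero_mem' := ⟨0, 0, by simp⟩
  add_mem' := by
    rintro x y ⟨a, k, rfl⟩ ⟨b, m, rfl⟩
    rcases eq_or_ne (n : ℚ) 0 with h | h
    · rcases Nat.eq_zero_or_pos k with rfl | hk
      · rcases Nat.eq_zero_or_pos m with rfl | hm
        · exact ⟨a + b, 0, by push_cast; simp⟩
        · exact ⟨a, 0, by simp [h, zero_pow hm.ne']⟩
      · rcases Nat.eq_zero_or_pos m with rfl | hm
        · exact ⟨b, 0, by simp [h, zero_pow hk.ne']⟩
        · exact ⟨0, 0, by simp [h, zero_pow hk.ne', zero_pow hm.ne']⟩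
    · refine ⟨a * n ^ m + b * n ^ k, k + m, ?_⟩
      rw [div_add_div _ _ (pow_ne_zero k h) (pow_ne_zero m h), pow_add]
      push_cast
      ring_nf
  neg_mem' := by
    rintro x ⟨a, k, rfl⟩
    exact ⟨-a, k, by push_cast; ring⟩

/-!
The second map is `(x, m) ↦ (m mod 2, x)`. Up to swapping the factors, the sequence is the
product of the identity `0 → ℤ[1/|k−ℓ|] → ℤ[1/|k−ℓ|] → 0` with
`0 → ℤ → ℤ → ℤ/2 → 0` (multiplication by `2`, then reduction mod `2`), hence exact.
-/

section

variable (A : Type*) [AddCommGroup A] (n : ℕ)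

def prodSwapCastHom : A × ℤ →+ ZMod n × A :=
  ((Int.castAddHom (ZMod n)).comp (AddMonoidHom.snd A ℤ)).prod (AddMonoidHom.fst A ℤ)

@[simp]
lemma prodSwapCastHom_apply (p : A × ℤ) : prodSwapCastHom A n p = ((p.2 : ZMod n), p.1) := rfl

lemma prodSwapCastHom_surjective : Function.Surjective (prodSwapCastHom A n) := by
  rintro ⟨z, x⟩
  obtain ⟨m, rfl⟩ := ZMod.intCast_surjective z
  exact ⟨(x, m), rfl⟩

lemma exact_zero_prod_mul_prodSwapCastHom :
    Function.Exact (fun m : ℤ => ((0 : A), (n : ℤ) * m)) (prodSwapCastHom A n) := by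
  rintro ⟨x, m⟩
  rw [prodSwapCastHom_apply, Prod.mk_eq_zero, ZMod.intCast_zmod_eq_zero_iff_dvd]
  constructor
  · rintro ⟨⟨q, rfl⟩, rfl⟩
    exact ⟨q, rfl⟩
  · rintro ⟨q, hq⟩
    cases hq
    exact ⟨⟨q, rfl⟩, rfl⟩

end

/-- For positive integers `k ≠ ℓ`, there is a short exact sequence
`0 → ℤ → ℤ[1/|k−ℓ|] ⊕ ℤ → ℤ/2ℤ ⊕ ℤ[1/|k−ℓ|] → 0`, where the first map sends
`n` to `(0, 2n)`. -/
theorem ses_quotient_cohomologies (k l : ℤ) :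
    ∃ g : (ZInv |k - l| × ℤ) →+ (ZMod 2 × ZInv |k - l|),
      Function.Injective
        (fun n : ℤ => ((0 : ZInv |k - l|), 2 * n)) ∧
      Function.Surjective g ∧
      Function.Exact
        (AddMonoidHom.mk' (fun n : ℤ => ((0 : ZInv |k - l|), 2 * n))
          (by intro p q; simp [Prod.ext_iff]; ring)) g :=
  ⟨prodSwapCastHom _ 2,
    fun _ _ h => mul_left_cancel₀ two_ne_zero (congrArg Prod.snd h),
    prodSwapCastHom_surjective _ 2,
    exact_zero_prod_mul_prodSwapCastHom _ 2⟩
end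

section
/- Let m ≥ 2 and let f : ℤ[1/m] → ℤ[1/m] be an injective group homomorphism. Then f is multiplication by some nonzero rational q such that q·ℤ[1/m] ⊆ ℤ[1/m], and the quotient ℤ[1/m]/f(ℤ[1/m]) is a finite cyclic group whose order is coprime to m. -/
theorem AddSubgroup.apply_eq_apply_one_mul {H : AddSubgroup ℚ} (h1 : (1 : ℚ) ∈ H)
    (f : H →+ ℚ) (x : H) : f x = f ⟨1, h1⟩ * x := by
  have hsmul : (x : ℚ).den • x = (x : ℚ).num • (⟨1, h1⟩ : H) :=
    Subtype.ext (by
      simp only [AddSubgroup.coe_nsmul, AddSubgroup.coe_zsmul, nsmul_eq_mul, zsmul_eq_mul, mul_one]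
      exact Rat.den_mul_eq_num _)
  have hden : ((x : ℚ).den : ℚ) ≠ 0 := by positivity
  have hf := congrArg f hsmul
  rw [map_nsmul, map_zsmul, nsmul_eq_mul, zsmul_eq_mul] at hf
  calc f x = (x : ℚ).num * f ⟨1, h1⟩ / (x : ℚ).den :=
        eq_div_of_mul_eq hden (by rw [mul_comm, hf])
    _ = f ⟨1, h1⟩ * x := by rw [mul_div_right_comm, Rat.num_div_den, mul_comm]

theorem Nat.exists_mul_coprime_dvd_pow (m : ℕ) {a : ℕ} (ha : a ≠ 0) :
    ∃ N g j : ℕ, a = N * g ∧ N.Coprime m ∧ g ∣ m ^ j := by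
  induction a using Nat.strong_induction_on with
  | _ a ih =>
    by_cases hcop : a.Coprime m
    · exact ⟨a, 1, 0, (mul_one a).symm, hcop, one_dvd _⟩
    obtain ⟨b, hb⟩ := Nat.gcd_dvd_left a m
    have hd : 1 < a.gcd m := by
      have := Nat.gcd_pos_of_pos_left m (Nat.pos_of_ne_zero ha)
      unfold Nat.Coprime at hcop
      omega
    have hb0 : b ≠ 0 := by rintro rfl; exact ha (by simpa using hb)
    have hba : b < a := by
      rw [hb]; exact lt_mul_left (Nat.pos_of_ne_zero hb0) hd
    obtain ⟨N, g, j, hbNg, hN, hg⟩ := ih b hba hb0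
    refine ⟨N, a.gcd m * g, j + 1, by rw [mul_left_comm, ← hbNg]; exact hb, hN, ?_⟩
    rw [pow_succ']
    exact mul_dvd_mul (Nat.gcd_dvd_right a m) hg

theorem Int.exists_mul_coprime_dvd_pow (m : ℤ) {a : ℤ} (ha : a ≠ 0) :
    ∃ (N : ℕ) (g : ℤ) (j : ℕ), a = N * g ∧ IsCoprime (N : ℤ) m ∧ g ∣ m ^ j := by
  obtain ⟨N, g, j, hNg, hN, hg⟩ :=
    Nat.exists_mul_coprime_dvd_pow m.natAbs (Int.natAbs_ne_zero.mpr ha)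
  have hcop : IsCoprime (N : ℤ) m := Int.isCoprime_iff_gcd_eq_one.mpr hN
  have hdvd : (g : ℤ) ∣ m ^ j := by
    rw [← Int.natAbs_dvd_natAbs, Int.natAbs_pow]; exact hg
  rcases Int.natAbs_eq a with h | h
  · exact ⟨N, g, j, by rw [h, hNg]; push_cast; ring, hcop, hdvd⟩
  · exact ⟨N, -g, j, by rw [h, hNg]; push_cast; ring, hcop, (neg_dvd).mpr hdvd⟩

namespace ZInv

variable {m : ℤ}

theorem intCast_mem (a : ℤ) : (a : ℚ) ∈ ZInv m := ⟨a, 0, by simp⟩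

theorem one_mem : (1 : ℚ) ∈ ZInv m := by exact_mod_cast intCast_mem (m := m) 1

theorem mul_mem {x y : ℚ} (hx : x ∈ ZInv m) (hy : y ∈ ZInv m) : x * y ∈ ZInv m := by
  obtain ⟨a, k, rfl⟩ := hx
  obtain ⟨b, j, rfl⟩ := hy
  exact ⟨a * b, k + j, by push_cast; rw [pow_add, div_mul_div_comm]⟩

theorem div_pow_mem {x : ℚ} (hx : x ∈ ZInv m) (k : ℕ) : x / (m : ℚ) ^ k ∈ ZInv m := by
  obtain ⟨a, j, rfl⟩ := hx
  exact ⟨a, j + k, by rw [div_div, pow_add]⟩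

theorem inv_mem_of_dvd_pow (hm : m ≠ 0) {g : ℤ} {j : ℕ} (hg : g ∣ m ^ j) :
    (g : ℚ)⁻¹ ∈ ZInv m := by
  obtain ⟨t, ht⟩ := hg
  have hg0 : (g : ℚ) ≠ 0 := Int.cast_ne_zero.mpr (left_ne_zero_of_mul (ht ▸ pow_ne_zero j hm))
  refine ⟨t, j, ?_⟩
  rw [eq_div_iff (pow_ne_zero j (by exact_mod_cast hm)), ← Int.cast_pow, ht, Int.cast_mul]
  field_simp

theorem mem_range_iff {f : ZInv m →+ ZInv m} {N : ℤ} {u v : ℚ}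
    (hf : ∀ x, (f x : ℚ) = N * u * x) (hu : u ∈ ZInv m) (hv : v ∈ ZInv m) (huv : u * v = 1)
    (y : ZInv m) : y ∈ f.range ↔ ∃ x ∈ ZInv m, (y : ℚ) = N * x := by
  constructor
  · rintro ⟨x, rfl⟩
    exact ⟨u * x, mul_mem hu x.2, by rw [hf]; ring⟩
  · rintro ⟨x, hx, hy⟩
    refine ⟨⟨v * x, mul_mem hv hx⟩, Subtype.ext ?_⟩
    rw [hf, hy]
    linear_combination (N * x) * huv

theorem nonempty_quotient_addEquiv_zmod (hm : m ≠ 0) {N : ℕ} (hN : IsCoprime (N : ℤ) m)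
    (H : AddSubgroup (ZInv m))
    (hH : ∀ y : ZInv m, y ∈ H ↔ ∃ x ∈ ZInv m, (y : ℚ) = N * x) :
    Nonempty (ZInv m ⧸ H ≃+ ZMod N) := by
  let ψ : ℤ →+ ZInv m ⧸ H := (QuotientAddGroup.mk' H).comp (zmultiplesHom _ ⟨1, one_mem⟩)
  have hm' : (m : ℚ) ≠ 0 := by exact_mod_cast hm
  have hsurj : Function.Surjective ψ := by
    intro z
    obtain ⟨y, rfl⟩ := QuotientAddGroup.mk'_surjective H z
    obtain ⟨a, k, hy⟩ := y.2
    obtain ⟨s, t, hst⟩ := hN.pow_right (n := k)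
    have has : (a * s / m ^ k : ℚ) ∈ ZInv m := by
      exact_mod_cast div_pow_mem (intCast_mem (a * s)) k
    refine ⟨a * t, QuotientAddGroup.eq.mpr ((hH _).mpr ⟨_, has, ?_⟩)⟩
    have hst' : (s : ℚ) * N + t * (m : ℚ) ^ k = 1 := by exact_mod_cast hst
    simp only [AddSubgroup.coe_add, AddSubgroup.coe_neg, zmultiplesHom_apply,
      AddSubgroup.coe_zsmul, zsmul_eq_mul, mul_one, hy]
    push_cast
    field_simp
    linear_combination -(a : ℚ) * hst'
  have hker : ψ.ker = AddSubgroup.zmultiples (N : ℤ) := by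
    ext c
    rw [AddMonoidHom.mem_ker, Int.mem_zmultiples_iff]
    refine (QuotientAddGroup.eq_zero_iff _).trans ((hH _).trans ?_)
    simp only [zmultiplesHom_apply, AddSubgroup.coe_zsmul, zsmul_eq_mul, mul_one]
    constructor
    · rintro ⟨x, ⟨b, k, rfl⟩, hc⟩
      refine (hN.pow_right (n := k)).dvd_of_dvd_mul_right ⟨b, ?_⟩
      rw [mul_div_assoc', eq_div_iff (pow_ne_zero k hm')] at hc
      exact_mod_cast hc
    · rintro ⟨d, rfl⟩
      exact ⟨d, intCast_mem d, by push_cast; rfl⟩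
  exact ⟨(QuotientAddGroup.quotientKerEquivOfSurjective ψ hsurj).symm.trans
    ((QuotientAddGroup.quotientAddEquivOfEq hker).trans (Int.quotientZMultiplesNatEquivZMod N))⟩

end ZInv

/-- Every injective endomorphism `f` of `ℤ[1/m]` (for `m ≥ 2`) is multiplication by a
nonzero rational `q` with `q·ℤ[1/m] ⊆ ℤ[1/m]`, and the cokernel `ℤ[1/m]/f(ℤ[1/m])` is a
finite cyclic group whose order is coprime to `m`. -/
theorem ZInv_injective_endomorphism (m : ℤ) (hm : 2 ≤ m)
    (f : (ZInv m) →+ (ZInv m)) (hf : Function.Injective f) :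
    ∃ q : ℚ, q ≠ 0 ∧ (∀ x : ZInv m, ((f x : ℚ)) = q * (x : ℚ)) ∧
      (∀ x : ZInv m, q * (x : ℚ) ∈ ZInv m) ∧
      ∃ N : ℕ, 0 < N ∧ IsCoprime (N : ℤ) m ∧
        Nonempty (((ZInv m) ⧸ f.range) ≃+ ZMod N) := by
  have hm0 : m ≠ 0 := by omega
  set q : ℚ := (f ⟨1, ZInv.one_mem⟩ : ℚ)
  have hmul (x : ZInv m) : (f x : ℚ) = q * x :=
    AddSubgroup.apply_eq_apply_one_mul ZInv.one_mem ((ZInv m).subtype.comp f) x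
  have hq0 : q ≠ 0 := by
    have hone : (⟨1, ZInv.one_mem⟩ : ZInv m) ≠ 0 :=
      fun h => one_ne_zero (congrArg Subtype.val h)
    exact fun h => (map_ne_zero_iff f hf).mpr hone (Subtype.ext h)
  obtain ⟨a, k, hq⟩ : q ∈ ZInv m := (f _).2
  have ha : a ≠ 0 := by rintro rfl; simp [hq] at hq0
  obtain ⟨N, g, j, rfl, hN, hg⟩ := Int.exists_mul_coprime_dvd_pow m ha
  have hN0 : 0 < N := by
    refine Nat.pos_of_ne_zero fun h => ?_
    rw [h, Nat.cast_zero, isCoprime_zero_left, Int.isUnit_iff] at hN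
    omega
  have hg0 : (g : ℚ) ≠ 0 := Int.cast_ne_zero.mpr (right_ne_zero_of_mul ha)
  have hrange := ZInv.mem_range_iff (f := f) (N := N) (u := g / m ^ k) (v := m ^ k * (g : ℚ)⁻¹)
    (fun x => by rw [hmul, hq]; push_cast; ring) (ZInv.div_pow_mem (ZInv.intCast_mem g) k)
    (ZInv.mul_mem (by exact_mod_cast ZInv.intCast_mem (m := m) (m ^ k))
      (ZInv.inv_mem_of_dvd_pow hm0 hg))
    (by field_simp)
  exact ⟨q, hq0, hmul, fun x => hmul x ▸ (f x).2, N, hN0, hN,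
    ZInv.nonempty_quotient_addEquiv_zmod hm0 hN _ hrange⟩
end
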